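/- Let T ≥ 3 be an integer, K = ⌊(T−1)/2⌋, and let Z be a nonempty set. For each t ∈ {1,…,T} and each nonempty subset D ⊆ 𝒴, let F_t(·|D) : 𝒴 → ℝ and F′_t(·|D) : 𝒴 → ℝ each satisfy F_t(y|D) > 0 for y ∈ D, F_t(y|D) = 0 for y ∉ D, and Σ_{y∈𝒴} F_t(y|D) = 1 (and likewise for F′); these conditional choice distributions do not depend on z (excluded covariates). For each z ∈ Z, let (𝒟_z, m_z, (F_t)_{t=1}^{T}) and (𝒟′_z, m′_z, (F′_t)_{t=1}^{T}) be choice-set structures on 𝒴 with horizon T, each satisfying the linear independence condition of Theorem 1 (for every 𝒯* ⊆ {1,…,T} with |𝒯*| = K, the family {(y_t)_{t∈𝒯*} ↦ ∏_{t∈𝒯*} F_t(y_t|D)}_{D∈𝒟_z}, respectively the primed family over 𝒟′_z, is linearly independent), and suppose the two structures induce the same joint distribution on 𝒴^T for every z ∈ Z. If ⋃_{z∈Z} 𝒟_z = 2^𝒴 ∖ {∅}, then F′_t(·|D) = F_t(·|D) for every t ∈ {1,…,T} and every nonempty subset D ⊆ 𝒴. -/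

import Mathlib

/-!
Fix a period `t`, a nonempty `D` and a covariate value `z` with `D ∈ 𝒟 z`. Since `2K ≤ T - 1`
there are disjoint sets of periods `𝒯₁, 𝒯₂` of size `K` avoiding `t`. Marginalizing the joint
distribution onto `𝒯₁ ∪ 𝒯₂ ∪ {t}` and onto `𝒯₁ ∪ 𝒯₂` gives a three-way and a two-way
decomposition `∑ m A B C = ∑ m' A' B' C'`, `∑ m A B = ∑ m' A' B'`. Dual functionals to the
independent primed `𝒯₂`-products `B'` write each `m' A'` through the `A`'s; independence of the
unprimed `𝒯₁`-products `A` then matches coefficients, and independence of the `B'` once more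
shows that the period-`t` distribution `F t D` equals some `F' t D'`. Equal supports give `D' = D`.
-/

open Finset

lemma LinearIndepOn.exists_dual_apply_eq_ite {K V ι : Type*} [Field K] [AddCommGroup V]
    [Module K V] [DecidableEq ι] {v : ι → V} {s : Set ι} (hv : LinearIndepOn K v s) {j : ι}
    (hj : j ∈ s) :
    ∃ φ : Module.Dual K V, ∀ i ∈ s, φ (v i) = if i = j then 1 else 0 := by
  obtain ⟨φ, hφ⟩ := LinearMap.exists_extend (Finsupp.lapply ⟨j, hj⟩ ∘ₗ hv.repr)
  refine ⟨φ, fun i hi => ?_⟩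
  let x : Submodule.span K (Set.range fun i : s => v i) :=
    ⟨v i, Submodule.subset_span ⟨⟨i, hi⟩, rfl⟩⟩
  have := LinearMap.congr_fun hφ x
  simpa [x, hv.repr_eq_single ⟨i, hi⟩ x rfl, Finsupp.single_apply] using this

lemma linearIndepOn_finset_iff_forall_apply {K ι α : Type*} [Field K] {v : ι → α → K}
    {s : Finset ι} :
    LinearIndepOn K v s ↔ ∀ f : ι → K, (∀ x, ∑ i ∈ s, f i * v i x = 0) → ∀ i ∈ s, f i = 0 := by
  simp only [linearIndepOn_finset_iff, funext_iff, Finset.sum_apply, Pi.smul_apply, smul_eq_mul,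
    Pi.zero_apply]

lemma Function.support_eq_of_ne_zero_of_eq_zero {Y M : Type*} [Zero M] {f : Y → M}
    {D : Finset Y} (hne : ∀ y ∈ D, f y ≠ 0) (hzero : ∀ y ∉ D, f y = 0) :
    Function.support f = D := by
  ext y
  by_cases hy : y ∈ D <;> simp [hy, hne, hzero]

lemma Finset.exists_disjoint_subsets_card_eq {α : Type*} [DecidableEq α] {s : Finset α} {k : ℕ}
    (h : 2 * k ≤ s.card) :
    ∃ s₁ ⊆ s, ∃ s₂ ⊆ s, Disjoint s₁ s₂ ∧ s₁.card = k ∧ s₂.card = k := by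
  obtain ⟨s₁, h₁, hcard₁⟩ := exists_subset_card_eq (show k ≤ s.card by omega)
  obtain ⟨s₂, h₂, hcard₂⟩ := exists_subset_card_eq
    (show k ≤ (s \ s₁).card by rw [card_sdiff_of_subset h₁]; omega)
  exact ⟨s₁, h₁, s₂, h₂.trans sdiff_subset, disjoint_of_subset_right h₂ disjoint_sdiff,
    hcard₁, hcard₂⟩

lemma Finset.prod_union_piecewise {τ Y M : Type*} [DecidableEq τ] [CommMonoid M]
    {S₁ S₂ : Finset τ} (h : Disjoint S₁ S₂) (g : τ → Y → M) (a b : τ → Y) :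
    ∏ s ∈ S₁ ∪ S₂, g s (S₁.piecewise a b s) = (∏ s ∈ S₁, g s (a s)) * ∏ s ∈ S₂, g s (b s) := by
  rw [prod_union h]
  congr 1
  · exact prod_congr rfl fun s hs => by rw [piecewise_eq_of_mem _ _ _ hs]
  · exact prod_congr rfl fun s hs => by
      rw [piecewise_eq_of_notMem _ _ _ (disjoint_right.1 h hs)]

section Trilinear

variable {K ι ι' α β γ : Type*} [Field K] {s : Finset ι} {s' : Finset ι'}
  {w : ι → K} {w' : ι' → K} {A : ι → α → K} {B : ι → β → K} {C : ι → γ → K}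
  {A' : ι' → α → K} {B' : ι' → β → K} {C' : ι' → γ → K}

theorem exists_eq_of_sum_mul_mul_eq (hA : LinearIndepOn K A s) (hB' : LinearIndepOn K B' s')
    (h₂ : ∀ a b, ∑ i ∈ s, w i * (A i a * B i b) = ∑ j ∈ s', w' j * (A' j a * B' j b))
    (h₃ : ∀ a b c, ∑ i ∈ s, w i * (A i a * (B i b * C i c))
      = ∑ j ∈ s', w' j * (A' j a * (B' j b * C' j c)))
    {i : ι} (hi : i ∈ s) (hw : w i ≠ 0) (hB : B i ≠ 0) : ∃ j ∈ s', C' j = C i := by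
  classical
  choose! φ hφ using fun j (hj : j ∈ s') => hB'.exists_dual_apply_eq_ite (mem_coe.2 hj)
  have hA' : ∀ j ∈ s', ∀ a, w' j * A' j a = ∑ k ∈ s, w k * A k a * φ j (B k) := by
    intro j hj a
    have hfun : ∑ k ∈ s, (w k * A k a) • B k = ∑ l ∈ s', (w' l * A' l a) • B' l :=
      funext fun b => by simpa [Finset.sum_apply, mul_assoc] using h₂ a b
    have := congrArg (φ j) hfun
    simp only [map_sum, map_smul, smul_eq_mul] at this
    rw [this, sum_congr rfl fun l hl => by rw [hφ j hj l hl]]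
    simp [hj]
  have extract : ∀ (X : ι → K) (E : ι' → K),
      (∀ a, ∑ k ∈ s, w k * (A k a * X k) = ∑ j ∈ s', w' j * (A' j a * E j)) →
      X i = ∑ j ∈ s', φ j (B i) * E j := by
    intro X E hXE
    -- substitute `hA'` on the right and compare coefficients of the independent `A k`
    have hzero := linearIndepOn_finset_iff_forall_apply.1 hA
      (fun k => w k * (X k - ∑ j ∈ s', φ j (B k) * E j)) (fun a => ?_) i hi
    · exact sub_eq_zero.1 ((mul_eq_zero.1 hzero).resolve_left hw)
    calc ∑ k ∈ s, w k * (X k - ∑ j ∈ s', φ j (B k) * E j) * A k a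
        = ∑ k ∈ s, w k * (A k a * X k)
          - ∑ j ∈ s', (∑ k ∈ s, w k * A k a * φ j (B k)) * E j := by
          simp only [mul_sub, sub_mul, sum_sub_distrib, mul_sum, sum_mul]
          rw [sum_comm (s := s')]
          congr 1
          · exact sum_congr rfl fun _ _ => by ring
          · exact sum_congr rfl fun _ _ => sum_congr rfl fun _ _ => by ring
      _ = 0 := by
          rw [hXE, ← sum_sub_distrib]
          exact sum_eq_zero fun j hj => by rw [← hA' j hj a]; ring
  have hBi : ∀ b, B i b = ∑ j ∈ s', φ j (B i) * B' j b :=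
    fun b => extract (fun k => B k b) (fun j => B' j b) (fun a => h₂ a b)
  have hBCi : ∀ b c, B i b * C i c = ∑ j ∈ s', φ j (B i) * (B' j b * C' j c) :=
    fun b c => extract _ _ (h₃ · b c)
  have hcoef : ∀ c, ∀ j ∈ s', φ j (B i) * (C' j c - C i c) = 0 := by
    refine fun c => linearIndepOn_finset_iff_forall_apply.1 hB' _ fun b => ?_
    calc ∑ j ∈ s', φ j (B i) * (C' j c - C i c) * B' j b
        = ∑ j ∈ s', φ j (B i) * (B' j b * C' j c) - C i c * ∑ j ∈ s', φ j (B i) * B' j b := by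
          rw [mul_sum, ← sum_sub_distrib]
          exact sum_congr rfl fun _ _ => by ring
      _ = 0 := by rw [← hBCi, ← hBi]; ring
  obtain ⟨b, hb⟩ := Function.ne_iff.1 hB
  obtain ⟨j, hj, hφj⟩ := exists_ne_zero_of_sum_ne_zero (hBi b ▸ hb)
  refine ⟨j, hj, funext fun c => ?_⟩
  exact sub_eq_zero.1 ((mul_eq_zero.1 (hcoef c j hj)).resolve_left (left_ne_zero_of_mul hφj))

end Trilinear

section ProductMixture

variable {ι τ Y R : Type*} [Fintype Y] [CommSemiring R]

def productMixture (𝒜 : Finset ι) (w : ι → R) (G : τ → ι → Y → R) (S : Finset τ)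
    (ys : τ → Y) : R :=
  ∑ D ∈ 𝒜, w D * ∏ s ∈ S, G s D (ys s)

variable [DecidableEq τ] {𝒜 𝒜' : Finset ι} {w w' : ι → R} {G G' : τ → ι → Y → R}
  {S : Finset τ}

theorem productMixture_erase {a : τ} (ha : a ∈ S) (hG : ∀ D ∈ 𝒜, ∑ y, G a D y = 1)
    (ys : τ → Y) :
    productMixture 𝒜 w G (S.erase a) ys
      = ∑ y, productMixture 𝒜 w G S (Function.update ys a y) := by
  unfold productMixture
  rw [sum_comm]
  refine sum_congr rfl fun D hD => ?_
  have hprod : ∀ y, ∏ s ∈ S, G s D (Function.update ys a y s)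
      = G a D y * ∏ s ∈ S.erase a, G s D (ys s) := fun y => by
    rw [← mul_prod_erase S _ ha, Function.update_self]
    exact congrArg _ <| prod_congr rfl fun s hs => by
      rw [Function.update_of_ne (ne_of_mem_erase hs)]
  simp_rw [hprod]
  rw [← mul_sum, ← sum_mul, hG D hD, one_mul]

theorem productMixture_eq_of_subset (hG : ∀ s ∈ S, ∀ D ∈ 𝒜, ∑ y, G s D y = 1)
    (hG' : ∀ s ∈ S, ∀ D ∈ 𝒜', ∑ y, G' s D y = 1)
    (h : ∀ ys, productMixture 𝒜 w G S ys = productMixture 𝒜' w' G' S ys)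
    {S' : Finset τ} (hS' : S' ⊆ S) (ys : τ → Y) :
    productMixture 𝒜 w G S' ys = productMixture 𝒜' w' G' S' ys := by
  suffices ∀ E : Finset τ, ∀ ys,
      productMixture 𝒜 w G (S \ E) ys = productMixture 𝒜' w' G' (S \ E) ys by
    simpa only [Finset.sdiff_sdiff_eq_self hS'] using this (S \ S') ys
  intro E
  induction E using Finset.induction_on with
  | empty => simpa only [sdiff_empty] using h
  | insert a E _ ih =>
    intro ys
    rw [sdiff_insert]
    by_cases ha : a ∈ S \ E
    · have haS := (mem_sdiff.1 ha).1
      rw [productMixture_erase ha (hG a haS), productMixture_erase ha (hG' a haS)]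
      exact sum_congr rfl fun y _ => ih _
    · rw [erase_eq_of_notMem ha]
      exact ih ys

end ProductMixture

theorem exists_eq_of_productMixture_eq {ι τ Y K : Type*} [Fintype Y] [DecidableEq τ] [Field K]
    {𝒜 𝒜' : Finset ι} {w w' : ι → K} {G G' : τ → ι → Y → K} {S 𝒯₁ 𝒯₂ : Finset τ} {t : τ}
    (hG : ∀ s ∈ S, ∀ D ∈ 𝒜, ∑ y, G s D y = 1) (hG' : ∀ s ∈ S, ∀ D ∈ 𝒜', ∑ y, G' s D y = 1)
    (h : ∀ ys, productMixture 𝒜 w G S ys = productMixture 𝒜' w' G' S ys)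
    (h₁ : 𝒯₁ ⊆ S) (h₂ : 𝒯₂ ⊆ S) (ht : t ∈ S) (h₁₂ : Disjoint 𝒯₁ 𝒯₂) (ht₁ : t ∉ 𝒯₁)
    (ht₂ : t ∉ 𝒯₂)
    (hLI : LinearIndepOn K (fun D (ys : τ → Y) => ∏ s ∈ 𝒯₁, G s D (ys s)) 𝒜)
    (hLI' : LinearIndepOn K (fun D (ys : τ → Y) => ∏ s ∈ 𝒯₂, G' s D (ys s)) 𝒜')
    {D : ι} (hD : D ∈ 𝒜) (hw : w D ≠ 0) (hB : ∃ ys : τ → Y, ∏ s ∈ 𝒯₂, G s D (ys s) ≠ 0) :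
    ∃ D' ∈ 𝒜', G' t D' = G t D := by
  have agree := fun S' (hS' : S' ⊆ S) => productMixture_eq_of_subset hG hG' h hS'
  refine exists_eq_of_sum_mul_mul_eq (w' := w')
    (A' := fun D (ys : τ → Y) => ∏ s ∈ 𝒯₁, G' s D (ys s))
    (B := fun D (ys : τ → Y) => ∏ s ∈ 𝒯₂, G s D (ys s))
    (C := fun D => G t D) (C' := fun D => G' t D) hLI hLI'
    (fun a b => ?_) (fun a b c => ?_) hD hw (Function.ne_iff.2 hB)
  · simpa only [productMixture, prod_union_piecewise h₁₂]
      using agree _ (union_subset h₁ h₂) (𝒯₁.piecewise a b)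
  · have h₁₂t : Disjoint 𝒯₁ (𝒯₂ ∪ {t}) :=
      disjoint_union_right.2 ⟨h₁₂, disjoint_singleton_right.2 ht₁⟩
    simpa only [productMixture, prod_union_piecewise h₁₂t,
      prod_union_piecewise (disjoint_singleton_right.2 ht₂), prod_singleton]
      using agree _ (union_subset h₁ (union_subset h₂ (singleton_subset_iff.2 ht)))
        (𝒯₁.piecewise a (𝒯₂.piecewise b fun _ => c))

/-- Time is 0-based: the periods `{1,…,T}` of the paper are `{0,…,T-1}`. -/
theorem full_variation_identification_general
    {Y : Type*} [Fintype Y]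
    {Z : Type*}
    (T : ℕ) (K : ℕ) (hK : K = (T - 1) / 2)
    (𝒟 𝒟' : Z → Finset (Finset Y))
    (h𝒟ne : ∀ z, ∀ D ∈ 𝒟 z, D.Nonempty) (h𝒟'ne : ∀ z, ∀ D ∈ 𝒟' z, D.Nonempty)
    (m m' : Z → Finset Y → ℝ)
    (hm : ∀ z, ∀ D ∈ 𝒟 z, 0 < m z D)
    (F F' : ℕ → Finset Y → Y → ℝ)
    (hFpos : ∀ t < T, ∀ D : Finset Y, D.Nonempty → ∀ y ∈ D, 0 < F t D y)
    (hFzero : ∀ t < T, ∀ D : Finset Y, D.Nonempty → ∀ y ∉ D, F t D y = 0)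
    (hFsum : ∀ t < T, ∀ D : Finset Y, D.Nonempty → ∑ y, F t D y = 1)
    (hF'pos : ∀ t < T, ∀ D : Finset Y, D.Nonempty → ∀ y ∈ D, 0 < F' t D y)
    (hF'zero : ∀ t < T, ∀ D : Finset Y, D.Nonempty → ∀ y ∉ D, F' t D y = 0)
    (hF'sum : ∀ t < T, ∀ D : Finset Y, D.Nonempty → ∑ y, F' t D y = 1)
    (hLI : ∀ z, ∀ 𝒯 ⊆ Finset.range T, 𝒯.card = K →
      ∀ α : Finset Y → ℝ,
        (∀ ys : ℕ → Y, ∑ D ∈ 𝒟 z, α D * ∏ t ∈ 𝒯, F t D (ys t) = 0) →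
        ∀ D ∈ 𝒟 z, α D = 0)
    (hLI' : ∀ z, ∀ 𝒯 ⊆ Finset.range T, 𝒯.card = K →
      ∀ α : Finset Y → ℝ,
        (∀ ys : ℕ → Y, ∑ D ∈ 𝒟' z, α D * ∏ t ∈ 𝒯, F' t D (ys t) = 0) →
        ∀ D ∈ 𝒟' z, α D = 0)
    (heq : ∀ z, ∀ ys : ℕ → Y,
      ∑ D ∈ 𝒟 z, m z D * ∏ t ∈ Finset.range T, F t D (ys t)
        = ∑ D ∈ 𝒟' z, m' z D * ∏ t ∈ Finset.range T, F' t D (ys t))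
    (hfull : ∀ D : Finset Y, D.Nonempty → ∃ z, D ∈ 𝒟 z) :
    ∀ t < T, ∀ D : Finset Y, D.Nonempty → ∀ y : Y, F' t D y = F t D y := by
  intro t ht D hD y
  obtain ⟨z, hDz⟩ := hfull D hD
  have htT : t ∈ range T := mem_range.2 ht
  obtain ⟨𝒯₁, h₁, 𝒯₂, h₂, h₁₂, hcard₁, hcard₂⟩ :=
    exists_disjoint_subsets_card_eq (s := (range T).erase t) (k := K)
      (by rw [card_erase_of_mem htT, card_range]; omega)
  have hsub₁ := h₁.trans (erase_subset _ _)
  have hsub₂ := h₂.trans (erase_subset _ _)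
  have ⟨y₁, hy₁⟩ := hD
  obtain ⟨D', hD', hFD'⟩ := exists_eq_of_productMixture_eq
    (fun s hs D hD => hFsum s (mem_range.1 hs) D (h𝒟ne z D hD))
    (fun s hs D hD => hF'sum s (mem_range.1 hs) D (h𝒟'ne z D hD)) (heq z)
    hsub₁ hsub₂ htT h₁₂
    (fun h => notMem_erase t _ (h₁ h)) (fun h => notMem_erase t _ (h₂ h))
    (linearIndepOn_finset_iff_forall_apply.2 (hLI z 𝒯₁ hsub₁ hcard₁))
    (linearIndepOn_finset_iff_forall_apply.2 (hLI' z 𝒯₂ hsub₂ hcard₂))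
    hDz (hm z D hDz).ne'
    ⟨fun _ => y₁, (prod_pos fun s hs => hFpos s (mem_range.1 (hsub₂ hs)) D hD y₁ hy₁).ne'⟩
  have hD'D : D' = D := by
    have hD'ne := h𝒟'ne z D' hD'
    have hsupp := congrArg Function.support hFD'
    rwa [Function.support_eq_of_ne_zero_of_eq_zero (fun y hy => (hF'pos t ht D' hD'ne y hy).ne')
        (hF'zero t ht D' hD'ne),
      Function.support_eq_of_ne_zero_of_eq_zero (fun y hy => (hFpos t ht D hD y hy).ne')
        (hFzero t ht D hD), coe_inj] at hsupp
  rw [← congrFun hFD' y, hD'D]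

/-- **Corollary 1 (full choice-set variation via excluded covariates).**
The conditional choice distributions `F`, `F'` do not depend on the excluded
covariate `z ∈ Z` and are full-support choice distributions on every nonempty
`D ⊆ 𝒴`.  If for every `z` the structures `(𝒟 z, m z, F)` and `(𝒟' z, m' z, F')`
are choice-set structures each satisfying the linear-independence condition of
Theorem 1, they induce the same joint distribution on `𝒴^T` for every `z`, and
the union `⋃_z 𝒟 z` is all of `2^𝒴 ∖ {∅}`, then `F' = F` on every nonempty
subset of `𝒴`.  Time is 0-based: `{1,…,T}` of the paper is `{0,…,T-1}`. -/
theorem full_variation_identification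
    {Y : Type*} [Fintype Y] [DecidableEq Y] [Nonempty Y]
    {Z : Type*} [Nonempty Z]
    (T : ℕ) (hT : 3 ≤ T) (K : ℕ) (hK : K = (T - 1) / 2)
    (𝒟 𝒟' : Z → Finset (Finset Y))
    (h𝒟 : ∀ z, (𝒟 z).Nonempty) (h𝒟' : ∀ z, (𝒟' z).Nonempty)
    (h𝒟ne : ∀ z, ∀ D ∈ 𝒟 z, D.Nonempty) (h𝒟'ne : ∀ z, ∀ D ∈ 𝒟' z, D.Nonempty)
    (m m' : Z → Finset Y → ℝ)
    (hm : ∀ z, ∀ D ∈ 𝒟 z, 0 < m z D) (hm' : ∀ z, ∀ D ∈ 𝒟' z, 0 < m' z D)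
    (hmsum : ∀ z, ∑ D ∈ 𝒟 z, m z D = 1) (hm'sum : ∀ z, ∑ D ∈ 𝒟' z, m' z D = 1)
    (F F' : ℕ → Finset Y → Y → ℝ)
    (hFpos : ∀ t < T, ∀ D : Finset Y, D.Nonempty → ∀ y ∈ D, 0 < F t D y)
    (hFzero : ∀ t < T, ∀ D : Finset Y, D.Nonempty → ∀ y ∉ D, F t D y = 0)
    (hFsum : ∀ t < T, ∀ D : Finset Y, D.Nonempty → ∑ y, F t D y = 1)
    (hF'pos : ∀ t < T, ∀ D : Finset Y, D.Nonempty → ∀ y ∈ D, 0 < F' t D y)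
    (hF'zero : ∀ t < T, ∀ D : Finset Y, D.Nonempty → ∀ y ∉ D, F' t D y = 0)
    (hF'sum : ∀ t < T, ∀ D : Finset Y, D.Nonempty → ∑ y, F' t D y = 1)
    (hLI : ∀ z, ∀ 𝒯 ⊆ Finset.range T, 𝒯.card = K →
      ∀ α : Finset Y → ℝ,
        (∀ ys : ℕ → Y, ∑ D ∈ 𝒟 z, α D * ∏ t ∈ 𝒯, F t D (ys t) = 0) →
        ∀ D ∈ 𝒟 z, α D = 0)
    (hLI' : ∀ z, ∀ 𝒯 ⊆ Finset.range T, 𝒯.card = K →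
      ∀ α : Finset Y → ℝ,
        (∀ ys : ℕ → Y, ∑ D ∈ 𝒟' z, α D * ∏ t ∈ 𝒯, F' t D (ys t) = 0) →
        ∀ D ∈ 𝒟' z, α D = 0)
    (heq : ∀ z, ∀ ys : ℕ → Y,
      ∑ D ∈ 𝒟 z, m z D * ∏ t ∈ Finset.range T, F t D (ys t)
        = ∑ D ∈ 𝒟' z, m' z D * ∏ t ∈ Finset.range T, F' t D (ys t))
    (hfull : ∀ D : Finset Y, D.Nonempty → ∃ z, D ∈ 𝒟 z) :
    ∀ t < T, ∀ D : Finset Y, D.Nonempty → ∀ y : Y, F' t D y = F t D y :=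
  full_variation_identification_general T K hK 𝒟 𝒟' h𝒟ne h𝒟'ne m m' hm F F' hFpos hFzero hFsum
    hF'pos hF'zero hF'sum hLI hLI' heq hfull
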